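/- arXiv:1711.02246 — 8 statements merged into one kernel-verified Lean document; each statement's English description precedes it below -/
import Mathlib

section
/- In a CFG, every node v with v ≠ End has a unique first proper postdominator: there exists exactly one proper postdominator v1 of v such that for every proper postdominator v2 of v with v2 ≠ v1, every path from v to v2 contains v1. -/
namespace Slicing

/-- A path is a nonempty list of nodes, consecutive ones related by `succ`,
starting at `v` and ending at `v'`. -/
def IsPath {V : Type} (succ : V → V → Prop) (p : List V) (v v' : V) : Prop :=
  p.Chain' succ ∧ p.head? = some v ∧ p.getLast? = some v'

/-- A control-flow graph: an edge relation and an `End` node with no successors,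
reachable from every node. -/
structure CFG (V : Type) where
  succ : V → V → Prop
  End : V
  end_no_succ : ∀ w, ¬ succ End w
  reach_end : ∀ v, ∃ p, IsPath succ p v End

variable {V : Type}

/-- `v1` postdominates `v`. -/
def PD (G : CFG V) (v v1 : V) : Prop :=
  ∀ p, IsPath G.succ p v G.End → v1 ∈ p

/-- `v1` is a proper postdominator of `v`. -/
def ProperPD (G : CFG V) (v v1 : V) : Prop :=
  PD G v v1 ∧ v1 ≠ v

/-- `v1` is a first proper postdominator of `v`: every path from `v` to any other
proper postdominator of `v` contains `v1`. -/
def IsFPPD (G : CFG V) (v v1 : V) : Prop :=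
  ProperPD G v v1 ∧
    ∀ v2, ProperPD G v v2 → v2 ≠ v1 → ∀ p, IsPath G.succ p v v2 → v1 ∈ p

/-- Maximum number of edges of an acyclic path from `v` to `v'`. -/
noncomputable def LAP (G : CFG V) (v v' : V) : ℕ :=
  sSup {n | ∃ p, IsPath G.succ p v v' ∧ p.Nodup ∧ p.length = n + 1}

/-- A node is cycle-inducing if, with `v'` its first proper postdominator,
some successor `vi` of `v` satisfies `LAP vi v' ≥ LAP v v'`. -/
def CycleInducing (G : CFG V) (v : V) : Prop :=
  ∃ v', IsFPPD G v v' ∧ ∃ vi, G.succ v vi ∧ LAP G v v' ≤ LAP G vi v'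

/-- `v` stays outside `Q` until `v'`: every path from `v` to `v'` in which `v'`
occurs only at the final position contains no node of `Q` except possibly `v'`. -/
def StaysOutside (G : CFG V) (Q : Set V) (v v' : V) : Prop :=
  ∀ p, IsPath G.succ p v v' → v' ∉ p.dropLast → ∀ w ∈ p, w ∈ Q → w = v'

/-- `v2` is data dependent on `v1`. -/
def DataDep {Var : Type} (G : CFG V) (Def Use : V → Set Var) (v1 v2 : V) : Prop :=
  ∃ x, x ∈ Use v2 ∧ x ∈ Def v1 ∧
    ∃ p, IsPath G.succ p v1 v2 ∧ 2 ≤ p.length ∧ ∀ w ∈ p.tail.dropLast, x ∉ Def w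

/-- `Q` is closed under data dependence. -/
def ClosedDD {Var : Type} (G : CFG V) (Def Use : V → Set Var) (Q : Set V) : Prop :=
  ∀ v1 v2, v2 ∈ Q → DataDep G Def Use v1 v2 → v1 ∈ Q

/-- The `Q`-relevant variables at `v`. -/
def rv {Var : Type} (G : CFG V) (Def Use : V → Set Var) (Q : Set V) (v : V) : Set Var :=
  {x | ∃ v' ∈ Q, x ∈ Use v' ∧
    ∃ p, IsPath G.succ p v v' ∧ p.Nodup ∧ ∀ w ∈ p, w ≠ v' → x ∉ Def w}

/-- `v'` is a next visible in `Q` of `v`. -/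
def IsNextVisible (G : CFG V) (Q : Set V) (v v' : V) : Prop :=
  (v' ∈ Q ∨ v' = G.End) ∧
    ∀ u, (u ∈ Q ∨ u = G.End) → ∀ p, IsPath G.succ p v u → v' ∈ p

/-- `Q` provides next visibles. -/
def ProvidesNextVisibles (G : CFG V) (Q : Set V) : Prop :=
  ∀ v, ∃ v', IsNextVisible G Q v v'

/-- A weak slice set provides next visibles and is closed under data dependence. -/
def WeakSliceSet {Var : Type} (G : CFG V) (Def Use : V → Set Var) (Q : Set V) : Prop :=
  ProvidesNextVisibles G Q ∧ ClosedDD G Def Use Q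

end Slicing

/-!
Fix a path `p` from `v` to `End`. Every proper postdominator of `v` lies on `p` (and `End` is
one), so let `v1` be the first one. Postdominance is antisymmetric, since a node strictly
postdominating `a` has a shorter shortest path to `End` than `a`. If a path `q` from `v` to
another proper postdominator `v2` avoided `v1`, then `v1` would postdominate `v2` (prolong `q`),
and `v2` would postdominate `v1` (prolong the prefix of `p` up to `v1`, which avoids `v2`).
Any other first proper postdominator would have to lie on that prefix, before `v1`.
-/

theorem List.exists_split_at_first {α : Type*} {P : α → Prop} {l : List α}
    (h : ∃ x ∈ l, P x) : ∃ as b bs, l = as ++ b :: bs ∧ P b ∧ ∀ a ∈ as, ¬ P a := by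
  classical
  obtain ⟨b, hb⟩ := Option.isSome_iff_exists.1
    (List.find?_isSome (p := fun x => decide (P x)).2 (by simpa using h))
  obtain ⟨hPb, as, bs, rfl, has⟩ := List.find?_eq_some_iff_append.1 hb
  exact ⟨as, b, bs, rfl, by simpa using hPb, fun a ha => by simpa using has a ha⟩

namespace Slicing

variable {V : Type}

section Paths

variable {succ : V → V → Prop}

theorem IsPath.last_mem {p : List V} {v v' : V} (hp : IsPath succ p v v') : v' ∈ p :=
  List.mem_of_getLast? hp.2.2

theorem isPath_append_cons_iff {l₁ l₂ : List V} {v w v' : V} :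
    IsPath succ (l₁ ++ w :: l₂) v v' ↔
      IsPath succ (l₁ ++ [w]) v w ∧ IsPath succ (w :: l₂) w v' := by
  constructor
  · rintro ⟨hc, hh, hl⟩
    obtain ⟨hc₁, hc₂⟩ := List.isChain_split.1 hc
    exact ⟨⟨hc₁, by cases l₁ <;> simpa using hh, by simp⟩,
      ⟨hc₂, rfl, by simpa [List.getLast?_append] using hl⟩⟩
  · rintro ⟨⟨hc₁, hh, -⟩, ⟨hc₂, -, hl⟩⟩
    exact ⟨List.isChain_split.2 ⟨hc₁, hc₂⟩, by cases l₁ <;> simpa using hh,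
      by simpa [List.getLast?_append] using hl⟩

theorem IsPath.dropLast_append {p q : List V} {v w u : V}
    (hp : IsPath succ p v w) (hq : IsPath succ q w u) : IsPath succ (p.dropLast ++ q) v u := by
  obtain ⟨t, rfl⟩ : ∃ t, q = w :: t := ⟨q.tail, (List.eq_cons_of_mem_head? hq.2.1)⟩
  rw [← List.dropLast_append_getLast? w hp.2.2] at hp
  exact isPath_append_cons_iff.2 ⟨hp, hq⟩

end Paths

noncomputable def minPathLength (G : CFG V) (v : V) : ℕ :=
  sInf {n | ∃ p, IsPath G.succ p v G.End ∧ p.length = n}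

theorem exists_isPath_length_eq_minPathLength (G : CFG V) (v : V) :
    ∃ p, IsPath G.succ p v G.End ∧ p.length = minPathLength G v := by
  obtain ⟨p, hp⟩ := G.reach_end v
  exact Nat.sInf_mem (s := {n | ∃ p, IsPath G.succ p v G.End ∧ p.length = n})
    ⟨p.length, p, hp, rfl⟩

theorem PD.minPathLength_lt {G : CFG V} {a b : V} (hab : PD G a b) (hne : a ≠ b) :
    minPathLength G b < minPathLength G a := by
  obtain ⟨p, hp, hlen⟩ := exists_isPath_length_eq_minPathLength G a
  obtain ⟨l₁, l₂, rfl⟩ := List.append_of_mem (hab p hp)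
  have hl₁ : l₁ ≠ [] := by
    rintro rfl
    exact hne (by simpa [IsPath] using hp.2.1.symm)
  calc minPathLength G b ≤ (b :: l₂).length :=
        Nat.sInf_le ⟨_, (isPath_append_cons_iff.1 hp).2, rfl⟩
    _ < (l₁ ++ b :: l₂).length := by simpa [Nat.pos_iff_ne_zero] using hl₁
    _ = minPathLength G a := hlen

theorem PD.antisymm {G : CFG V} {a b : V} (hab : PD G a b) (hba : PD G b a) : a = b := by
  by_contra hne
  have := hab.minPathLength_lt hne
  have := hba.minPathLength_lt (Ne.symm hne)
  omega

theorem PD.of_isPath_of_notMem {G : CFG V} {v w u : V} {q : List V} (hw : PD G v w)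
    (hq : IsPath G.succ q v u) (hwq : w ∉ q) : PD G u w := fun s hs => by
  rcases List.mem_append.1 (hw _ (hq.dropLast_append hs)) with h | h
  · exact absurd (List.dropLast_subset q h) hwq
  · exact h

theorem unique_first_proper_postdominator_general {V : Type}
    (G : CFG V) (v : V) (hv : v ≠ G.End) :
    ∃! v1, IsFPPD G v v1 := by
  obtain ⟨p, hp⟩ := G.reach_end v
  have hEnd : ProperPD G v G.End := ⟨fun _ hq => hq.last_mem, hv.symm⟩
  obtain ⟨as, v1, bs, rfl, hv1, hfirst⟩ := List.exists_split_at_first ⟨G.End, hp.last_mem, hEnd⟩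
  have hpre : IsPath G.succ (as ++ [v1]) v v1 := (isPath_append_cons_iff.1 hp).1
  have not_mem_pre : ∀ w, ProperPD G v w → w ≠ v1 → w ∉ as ++ [v1] := by
    intro w hw hne hmem
    simp only [List.mem_append, List.mem_singleton] at hmem
    exact hmem.elim (hfirst w · hw) hne
  refine ⟨v1, ⟨hv1, fun v2 hv2 hne q hq => ?_⟩, fun y hy => ?_⟩
  · by_contra hv1q
    exact hne ((hv1.1.of_isPath_of_notMem hq hv1q).antisymm
      (hv2.1.of_isPath_of_notMem hpre (not_mem_pre v2 hv2 hne)))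
  · by_contra hne
    exact not_mem_pre y hy.1 hne (hy.2 v1 hv1 (Ne.symm hne) _ hpre)

/-- Every node `v ≠ End` has a unique first proper postdominator. -/
theorem unique_first_proper_postdominator {V : Type} [Fintype V]
    (G : CFG V) (v : V) (hv : v ≠ G.End) :
    ∃! v1, IsFPPD G v v1 :=
  unique_first_proper_postdominator_general G v hv

end Slicing
end

section
/- Fix a node v of a CFG and define, on the proper postdominators of v, the relation v1 ≺ v2 to hold iff in every acyclic path from v to End, v1 occurs strictly before v2. Then ≺ is transitive and antisymmetric, and it is total: for any two distinct proper postdominators v1, v2 of v, either v1 ≺ v2 or v2 ≺ v1. Moreover, if v1 ≺ v2 then in every path from v to End, the first occurrence of v1 is strictly before the first occurrence of v2. -/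
namespace Slicing

section Paths

variable {V : Type} {succ : V → V → Prop}

theorem isPath_cons_cons_iff {x y w v : V} {t : List V} :
    IsPath succ (x :: y :: t) v w ↔ x = v ∧ succ x y ∧ IsPath succ (y :: t) y w := by
  change List.IsChain succ _ ∧ _ ↔ _ ∧ _ ∧ List.IsChain succ _ ∧ _
  simp only [List.isChain_cons_cons, List.head?_cons, Option.some.injEq,
    List.getLast?_cons_cons, true_and]
  tauto

theorem IsPath.splice {l₁ r₁ l₂ r₂ : List V} {a u v w w' : V}
    (hp : IsPath succ (l₁ ++ a :: r₁) v w) (hq : IsPath succ (l₂ ++ a :: r₂) u w') :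
    IsPath succ (l₁ ++ a :: r₂) v w' := by
  obtain ⟨hpc, hph, -⟩ := hp
  obtain ⟨hqc, -, hql⟩ := hq
  refine ⟨List.isChain_split.2 ⟨(List.isChain_split.1 hpc).1, (List.isChain_split.1 hqc).2⟩,
    ?_, ?_⟩
  · cases l₁ <;> simpa using hph
  · rwa [List.getLast?_append_cons] at hql ⊢

theorem IsPath.suffix {l r : List V} {a v w : V} (h : IsPath succ (l ++ a :: r) v w) :
    IsPath succ (a :: r) a w :=
  IsPath.splice (l₁ := []) (r₁ := []) ⟨List.isChain_singleton a, rfl, rfl⟩ h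

theorem IsPath.exists_nodup [DecidableEq V] {p : List V} {v w : V}
    (hp : IsPath succ p v w) : ∃ q, IsPath succ q v w ∧ q.Nodup := by
  induction p generalizing v with
  | nil => simp [IsPath] at hp
  | cons x t ih =>
    rcases t with _ | ⟨y, t⟩
    · exact ⟨[x], hp, List.nodup_singleton x⟩
    obtain ⟨rfl, hxy, hyt⟩ := isPath_cons_cons_iff.1 hp
    obtain ⟨q, hq, hqnd⟩ := ih hyt
    by_cases hxq : x ∈ q
    · obtain ⟨l, r, rfl, -⟩ := List.eq_append_cons_of_mem hxq
      exact ⟨x :: r, (hq.splice hq).suffix, hqnd.sublist (List.sublist_append_right l _)⟩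
    · obtain ⟨r, rfl⟩ := List.head?_eq_some_iff.1 hq.2.1
      exact ⟨x :: y :: r, isPath_cons_cons_iff.2 ⟨rfl, hxy, hq⟩, List.nodup_cons.2 ⟨hxq, hqnd⟩⟩

end Paths

variable {V : Type} [DecidableEq V] {G : CFG V}

/-- Splicing the part of `p` before `a` with the part of `q` from `a` on gives a path
to `End`, which must pass through the postdominator `w`. -/
theorem PD.idxOf_lt_or_idxOf_le {v w a : V} (hw : PD G v w) {p q : List V}
    (hp : IsPath G.succ p v G.End) (hq : IsPath G.succ q v G.End) (hqnd : q.Nodup)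
    (hap : a ∈ p) (haq : a ∈ q) : p.idxOf w < p.idxOf a ∨ q.idxOf a ≤ q.idxOf w := by
  obtain ⟨l₁, r₁, rfl, ha₁⟩ := List.eq_append_cons_of_mem hap
  obtain ⟨l₂, r₂, rfl, ha₂⟩ := List.eq_append_cons_of_mem haq
  rcases List.mem_append.1 (hw _ (hp.splice hq)) with hw₁ | hw₂
  · left
    rw [List.idxOf_append_of_mem hw₁, List.idxOf_append_of_notMem ha₁, List.idxOf_cons_self]
    simpa using List.idxOf_lt_length_iff.2 hw₁
  · right
    have hw₂' : w ∉ l₂ := fun hwl => (List.nodup_append.1 hqnd).2.2 w hwl w hw₂ rfl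
    rw [List.idxOf_append_of_notMem ha₂, List.idxOf_append_of_notMem hw₂',
      List.idxOf_cons_self]
    omega

theorem prec_ordering_general {V : Type} [DecidableEq V]
    (G : CFG V) (v : V) (Prec : V → V → Prop)
    (hPrec : ∀ v1 v2, Prec v1 v2 ↔
      ∀ p, IsPath G.succ p v G.End → p.Nodup → p.idxOf v1 < p.idxOf v2) :
    (∀ v1 v2 v3, ProperPD G v v1 → ProperPD G v v2 → ProperPD G v v3 →
      Prec v1 v2 → Prec v2 v3 → Prec v1 v3) ∧
    (∀ v1 v2, ProperPD G v v1 → ProperPD G v v2 →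
      Prec v1 v2 → Prec v2 v1 → v1 = v2) ∧
    (∀ v1 v2, ProperPD G v v1 → ProperPD G v v2 → v1 ≠ v2 →
      Prec v1 v2 ∨ Prec v2 v1) ∧
    (∀ v1 v2, ProperPD G v v1 → ProperPD G v v2 → Prec v1 v2 →
      ∀ p, IsPath G.succ p v G.End → p.idxOf v1 < p.idxOf v2) := by
  obtain ⟨p₀, hp₀⟩ := G.reach_end v
  obtain ⟨q₀, hq₀, hq₀nd⟩ := hp₀.exists_nodup
  refine ⟨?_, ?_, ?_, ?_⟩
  · intro v1 v2 v3 _ _ _ h12 h23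
    rw [hPrec] at h12 h23 ⊢
    exact fun p hp hpnd => (h12 p hp hpnd).trans (h23 p hp hpnd)
  · intro v1 v2 _ _ h12 h21
    exact absurd ((hPrec v1 v2).1 h12 q₀ hq₀ hq₀nd) ((hPrec v2 v1).1 h21 q₀ hq₀ hq₀nd).asymm
  · intro v1 v2 h1 h2 hne
    by_contra! hcon
    simp only [hPrec, not_forall, not_lt] at hcon
    obtain ⟨⟨p, hp, hpnd, hp21⟩, ⟨q, hq, -, hq12⟩⟩ := hcon
    rcases h2.1.idxOf_lt_or_idxOf_le hq hp hpnd (h1.1 q hq) (h1.1 p hp) with hq21 | hp12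
    · omega
    · exact hne ((List.idxOf_inj (h1.1 p hp)).1 (hp12.antisymm hp21))
  · intro v1 v2 h1 h2 h12 p hp
    exact (h1.1.idxOf_lt_or_idxOf_le hp hq₀ hq₀nd (h2.1 p hp) (h2.1 q₀ hq₀)).resolve_right
      ((hPrec v1 v2).1 h12 q₀ hq₀ hq₀nd).not_ge

/-- On the proper postdominators of `v`, the relation "occurs strictly before in every
acyclic path from `v` to `End`" is transitive, antisymmetric and total; moreover if
`v1 ≺ v2` then in every path from `v` to `End` the first occurrence of `v1` is
strictly before the first occurrence of `v2`. -/
theorem prec_ordering {V : Type} [Fintype V] [DecidableEq V]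
    (G : CFG V) (v : V) (Prec : V → V → Prop)
    (hPrec : ∀ v1 v2, Prec v1 v2 ↔
      ∀ p, IsPath G.succ p v G.End → p.Nodup → p.idxOf v1 < p.idxOf v2) :
    (∀ v1 v2 v3, ProperPD G v v1 → ProperPD G v v2 → ProperPD G v v3 →
      Prec v1 v2 → Prec v2 v3 → Prec v1 v3) ∧
    (∀ v1 v2, ProperPD G v v1 → ProperPD G v v2 →
      Prec v1 v2 → Prec v2 v1 → v1 = v2) ∧
    (∀ v1 v2, ProperPD G v v1 → ProperPD G v v2 → v1 ≠ v2 →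
      Prec v1 v2 ∨ Prec v2 v1) ∧
    (∀ v1 v2, ProperPD G v v1 → ProperPD G v v2 → Prec v1 v2 →
      ∀ p, IsPath G.succ p v G.End → p.idxOf v1 < p.idxOf v2) :=
  prec_ordering_general G v Prec hPrec

end Slicing
end

section
/- In a CFG, if v1 postdominates v and v2 postdominates v1 (hence v2 postdominates v), then LAP(v,v2) = LAP(v,v1) + LAP(v1,v2). -/
/-!
Since `v2` postdominates `v1`, some path from `v2` to `End` avoids `v1` (unless `v1 = v2`), so
every path from `v` to `v2` passes through `v1`. Splitting a longest acyclic path from `v` to `v2`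
at `v1` gives `LAP v v2 ≤ LAP v v1 + LAP v1 v2`. Conversely, acyclic paths `v → v1` and `v1 → v2`
meet only in `v1`: a common node `w ≠ v1` would yield a path `v → w → v2` avoiding `v1`. Hence the
concatenation of two longest such paths is acyclic, which gives the reverse inequality.
-/

namespace List

variable {α : Type*} {s t : List α} {a w : α}

theorem Nodup.notMem_left_of_getLast?_eq (hnd : (s ++ w :: t).Nodup)
    (hl : (s ++ w :: t).getLast? = some a) : a ∉ s := by
  rw [getLast?_append_of_ne_nil _ (cons_ne_nil w t)] at hl
  exact fun has => disjoint_of_nodup_append hnd has (mem_of_getLast? hl)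

theorem Nodup.notMem_right_of_head?_eq (hnd : (s ++ w :: t).Nodup)
    (hh : (s ++ w :: t).head? = some a) (haw : a ≠ w) : a ∉ t := by
  cases s with
  | nil => exact absurd (Option.some.inj hh).symm haw
  | cons b s =>
    obtain rfl : b = a := Option.some.inj hh
    exact fun hat => (nodup_cons.mp hnd).1 (by simp [hat])

end List

namespace Slicing

variable {V : Type}

namespace IsPath

variable {succ : V → V → Prop} {p s t : List V} {v w u : V}

theorem eq_cons (hp : IsPath succ p v u) : ∃ t, p = v :: t :=
  List.head?_eq_some_iff.mp hp.2.1

theorem end_mem (hp : IsPath succ p v u) : u ∈ p :=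
  List.mem_of_getLast? hp.2.2

theorem cons (h : succ v w) (hp : IsPath succ p w u) : IsPath succ (v :: p) v u := by
  obtain ⟨t, rfl⟩ := hp.eq_cons
  exact ⟨List.IsChain.cons_cons h hp.1, rfl, by simpa using hp.2.2⟩

theorem append (hp : IsPath succ p v w) (hq : IsPath succ (w :: t) w u) :
    IsPath succ (p ++ t) v u := by
  obtain ⟨p, rfl⟩ := hp.eq_cons
  refine ⟨List.IsChain.append hp.1 (List.isChain_cons.mp hq.1).2 ?_, rfl, ?_⟩
  · rw [hp.2.2]
    rintro x ⟨⟩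
    exact (List.isChain_cons.mp hq.1).1
  · cases t with
    | nil => simpa [← Option.some.inj hq.2.2] using hp.2.2
    | cons y t => simpa [List.getLast?_cons] using hq.2.2

theorem split (hp : IsPath succ (s ++ w :: t) v u) :
    IsPath succ (s ++ [w]) v w ∧ IsPath succ (w :: t) w u := by
  obtain ⟨hs, ht⟩ := List.isChain_split.mp hp.1
  refine ⟨⟨hs, ?_, by simp⟩, ⟨ht, rfl, ?_⟩⟩
  · cases s <;> simpa using hp.2.1
  · simpa using hp.2.2

theorem exists_nodup_s2 (hp : IsPath succ p v u) : ∃ q, IsPath succ q v u ∧ q.Nodup := by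
  induction p generalizing v with
  | nil => simp [IsPath] at hp
  | cons a t ih =>
    obtain rfl : a = v := Option.some.inj hp.2.1
    cases t with
    | nil => exact ⟨[a], hp, List.nodup_singleton a⟩
    | cons w t =>
      obtain ⟨q, hq, hqnd⟩ := ih (v := w) ⟨hp.1.tail, rfl, by simpa using hp.2.2⟩
      by_cases ha : a ∈ q
      · obtain ⟨s, r, rfl⟩ := List.append_of_mem ha
        exact ⟨a :: r, hq.split.2, hqnd.sublist (List.sublist_append_right s _)⟩
      · exact ⟨a :: q, hq.cons (List.rel_of_isChain_cons_cons hp.1), List.nodup_cons.mpr ⟨ha, hqnd⟩⟩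

end IsPath

section LAP

variable (G : CFG V) {p q : List V} {a b c : V} {n : ℕ}

theorem LAP_le_of_forall (h : ∀ p, IsPath G.succ p a b → p.Nodup → p.length ≤ n + 1) :
    LAP G a b ≤ n :=
  csSup_le' fun m ⟨p, hp, hnd, hlen⟩ => by have := h p hp hnd; omega

variable [Finite V]

theorem bddAbove_LAP_set :
    BddAbove {n | ∃ p, IsPath G.succ p a b ∧ p.Nodup ∧ p.length = n + 1} := by
  have := Fintype.ofFinite V
  exact ⟨Fintype.card V, fun n ⟨p, _, hnd, hlen⟩ => by have := hnd.length_le_card; omega⟩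

theorem length_le_LAP_add_one (hp : IsPath G.succ p a b) (hnd : p.Nodup) :
    p.length ≤ LAP G a b + 1 := by
  obtain ⟨t, rfl⟩ := hp.eq_cons
  exact Nat.succ_le_succ (le_csSup (bddAbove_LAP_set G) ⟨_, hp, hnd, rfl⟩)

theorem exists_isPath_length_eq_LAP (hp : IsPath G.succ p a b) :
    ∃ q, IsPath G.succ q a b ∧ q.Nodup ∧ q.length = LAP G a b + 1 := by
  obtain ⟨q, hq, hqnd⟩ := hp.exists_nodup_s2
  obtain ⟨t, rfl⟩ := hq.eq_cons
  exact Nat.sSup_mem (s := {n | ∃ p, IsPath G.succ p a b ∧ p.Nodup ∧ p.length = n + 1})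
    ⟨_, _, hq, hqnd, rfl⟩ (bddAbove_LAP_set G)

theorem LAP_le_LAP_add_LAP (h : ∀ p, IsPath G.succ p a c → b ∈ p) :
    LAP G a c ≤ LAP G a b + LAP G b c := by
  refine LAP_le_of_forall G fun p hp hnd => ?_
  obtain ⟨s, t, rfl⟩ := List.append_of_mem (h p hp)
  have hs := length_le_LAP_add_one G hp.split.1 (hnd.sublist (by simp))
  have ht := length_le_LAP_add_one G hp.split.2 (hnd.sublist (by simp))
  simp only [List.length_append, List.length_cons, List.length_nil] at hs ht ⊢
  omega

theorem LAP_add_LAP_le (hab : IsPath G.succ p a b) (hbc : IsPath G.succ q b c)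
    (hmeet : ∀ p q w, IsPath G.succ p a b → p.Nodup → IsPath G.succ q b c → q.Nodup →
      w ∈ p → w ∈ q → w = b) :
    LAP G a b + LAP G b c ≤ LAP G a c := by
  obtain ⟨p, hp, hpnd, hpl⟩ := exists_isPath_length_eq_LAP G hab
  obtain ⟨q, hq, hqnd, hql⟩ := exists_isPath_length_eq_LAP G hbc
  obtain ⟨t, rfl⟩ := hq.eq_cons
  have hnd : (p ++ t).Nodup := by
    refine List.nodup_append.mpr ⟨hpnd, hqnd.of_cons, fun w hwp w' hwt hww => ?_⟩
    subst hww
    obtain rfl := hmeet p _ w hp hpnd hq hqnd hwp (List.mem_cons_of_mem b hwt)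
    exact (List.nodup_cons.mp hqnd).1 hwt
  have := length_le_LAP_add_one G (hp.append hq) hnd
  simp only [List.length_append, List.length_cons] at this hpl hql
  omega

end LAP

namespace PD

variable {G : CFG V} {p q : List V} {v v1 v2 w : V}

theorem exists_isPath (h : PD G v v1) : ∃ p, IsPath G.succ p v v1 := by
  obtain ⟨p, hp⟩ := G.reach_end v
  obtain ⟨s, t, rfl⟩ := List.append_of_mem (h p hp)
  exact ⟨_, hp.split.1⟩

theorem exists_isPath_end_notMem (h : PD G v1 v2) (hne : v1 ≠ v2) :
    ∃ r, IsPath G.succ r v2 G.End ∧ v1 ∉ r := by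
  obtain ⟨r₀, hr₀⟩ := G.reach_end v2
  obtain ⟨r, hr, hrnd⟩ := hr₀.exists_nodup_s2
  -- an acyclic path that met `v1` would have to meet `v2` again after it
  refine ⟨r, hr, fun hv1 => ?_⟩
  obtain ⟨s, t, rfl⟩ := List.append_of_mem hv1
  have hv2t : v2 ∈ t := (List.mem_cons.mp (h _ hr.split.2)).resolve_left hne.symm
  exact hrnd.notMem_right_of_head?_eq hr.2.1 hne.symm hv2t

theorem mem_of_isPath (h1 : PD G v v1) (h2 : PD G v1 v2) (hp : IsPath G.succ p v v2) :
    v1 ∈ p := by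
  by_cases hne : v1 = v2
  · exact hne ▸ hp.end_mem
  obtain ⟨r, hr, hv1r⟩ := h2.exists_isPath_end_notMem hne
  obtain ⟨t, rfl⟩ := hr.eq_cons
  exact (List.mem_append.mp (h1 _ (hp.append hr))).resolve_right
    fun h => hv1r (List.mem_cons_of_mem v2 h)

theorem eq_of_mem_of_mem (h1 : PD G v v1) (h2 : PD G v1 v2)
    (hp : IsPath G.succ p v v1) (hpnd : p.Nodup) (hq : IsPath G.succ q v1 v2) (hqnd : q.Nodup)
    (hwp : w ∈ p) (hwq : w ∈ q) : w = v1 := by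
  by_contra hw
  obtain ⟨s, t, rfl⟩ := List.append_of_mem hwp
  obtain ⟨s', t', rfl⟩ := List.append_of_mem hwq
  have hmem := h1.mem_of_isPath h2 (hp.split.1.append hq.split.2)
  have hs := hpnd.notMem_left_of_getLast?_eq hp.2.2
  have ht' := hqnd.notMem_right_of_head?_eq hq.2.1 (Ne.symm hw)
  simp only [List.append_assoc, List.singleton_append, List.mem_append, List.mem_cons] at hmem
  tauto

end PD

/-- If `v1` postdominates `v` and `v2` postdominates `v1`, then
`LAP(v,v2) = LAP(v,v1) + LAP(v1,v2)`. -/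
theorem LAP_add {V : Type} [Fintype V] (G : CFG V) (v v1 v2 : V)
    (h1 : PD G v v1) (h2 : PD G v1 v2) :
    LAP G v v2 = LAP G v v1 + LAP G v1 v2 := by
  obtain ⟨p, hp⟩ := h1.exists_isPath
  obtain ⟨q, hq⟩ := h2.exists_isPath
  exact le_antisymm (LAP_le_LAP_add_LAP G fun _ => h1.mem_of_isPath h2)
    (LAP_add_LAP_le G hp hq fun _ _ _ => h1.eq_of_mem_of_mem h2)

end Slicing
end

section
/- In a labelled CFG, if Q1 and Q2 are weak slice sets, then Q1 ∪ Q2 is a weak slice set. -/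
namespace Slicing

variable {V : Type}

variable {V : Type}

theorem isPath_ne_nil {succ : V → V → Prop} {p : List V} {v v' : V}
    (h : IsPath succ p v v') : p ≠ [] := by
  rintro rfl; simp [IsPath] at h

/-- prefix of a path ending at index n is a path. -/
theorem isPath_take {succ : V → V → Prop} {p : List V} {v v' : V}
    (h : IsPath succ p v v') {n : ℕ} (hn : n < p.length) :
    IsPath succ (p.take (n+1)) v p[n] := by
  obtain ⟨hc, hh, hl⟩ := h
  refine ⟨hc.prefix (p.take_prefix _), ?_, ?_⟩
  · cases p with
    | nil => simp at hn
    | cons a t => simpa using hh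
  · rw [List.getLast?_eq_getElem?]
    have hlen : (p.take (n+1)).length = n + 1 := by
      rw [List.length_take]; omega
    rw [hlen]
    simp only [Nat.add_sub_cancel]
    rw [List.getElem?_take]
    simp [List.getElem?_eq_getElem hn]

/-- suffix of a path starting at index n is a path. -/
theorem isPath_drop {succ : V → V → Prop} {p : List V} {v v' : V}
    (h : IsPath succ p v v') {n : ℕ} (hn : n < p.length) :
    IsPath succ (p.drop n) p[n] v' := by
  obtain ⟨hc, hh, hl⟩ := h
  have hne : p.drop n ≠ [] := by
    simp [List.drop_eq_nil_iff]; omega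
  refine ⟨hc.suffix (p.drop_suffix _), ?_, ?_⟩
  · rw [List.head?_eq_head hne, List.head_drop]
  · rw [← List.take_append_drop n p] at hl
    rwa [List.getLast?_append_of_ne_nil _ hne] at hl

/-- splicing two paths. -/
theorem isPath_append {succ : V → V → Prop} {p q : List V} {v x v' : V}
    (hp : IsPath succ p v x) (hq : IsPath succ q x v') :
    IsPath succ (p ++ q.tail) v v' := by
  obtain ⟨hc, hh, hl⟩ := hp
  obtain ⟨hc', hh', hl'⟩ := hq
  cases q with
  | nil => simp at hh'
  | cons a t =>
    simp only [List.head?_cons, Option.some.injEq] at hh'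
    subst hh'
    cases t with
    | nil =>
      simp only [List.getLast?_singleton, Option.some.injEq] at hl'
      subst hl'
      simpa using ⟨hc, hh, hl⟩
    | cons b t' =>
      refine ⟨?_, ?_, ?_⟩
      · apply hc.append hc'.tail
        intro y hy z hz
        simp only [Option.mem_def] at hy hz
        rw [hy] at hl
        have hya : y = a := by injection hl
        simp only [List.tail_cons, List.head?_cons, Option.some.injEq] at hz
        subst hya hz
        exact (List.isChain_cons_cons.mp hc').1
      · rwa [List.head?_append_of_ne_nil _ (isPath_ne_nil ⟨hc, hh, hl⟩)]
      · rw [List.getLast?_append_of_ne_nil _ (by simp)]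
        simpa using hl'

/-- Every path can be shortened to an acyclic (nodup) path with
the same endpoints. -/
theorem exists_nodup_isPath {succ : V → V → Prop} {v v' : V} {p : List V}
    (h : IsPath succ p v v') : ∃ q, IsPath succ q v v' ∧ q.Nodup := by
  suffices H : ∀ n (p : List V) (v v' : V), p.length = n → IsPath succ p v v' →
      ∃ q, IsPath succ q v v' ∧ q.Nodup from H _ p v v' rfl h
  intro n
  induction n using Nat.strong_induction_on with
  | _ n ih =>
    intro p v v' hn h
    subst hn
    by_cases hd : p.Nodup
    · exact ⟨p, h, hd⟩
    · rw [List.nodup_iff_injective_get] at hd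
      simp only [Function.Injective] at hd
      push_neg at hd
      obtain ⟨i, j, heq, hne⟩ := hd
      -- wlog i < j
      obtain ⟨i, j, hlt, heq⟩ : ∃ i j : Fin p.length, (i:ℕ) < (j:ℕ) ∧ p.get i = p.get j := by
        rcases Nat.lt_or_ge (i:ℕ) (j:ℕ) with hh | hh
        · exact ⟨i, j, hh, heq⟩
        · refine ⟨j, i, ?_, heq.symm⟩
          rcases Nat.lt_or_ge (j:ℕ) (i:ℕ) with hh' | hh'
          · exact hh'
          · exact absurd (Fin.ext (le_antisymm hh' hh)) hne
      have hi : (i:ℕ) < p.length := i.isLt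
      have hj : (j:ℕ) < p.length := j.isLt
      have h1 : IsPath succ (p.take ((i:ℕ)+1)) v p[(i:ℕ)] := isPath_take h hi
      have h2 : IsPath succ (p.drop (j:ℕ)) p[(i:ℕ)] v' := by
        have := isPath_drop h hj
        have hij : p[(i:ℕ)] = p[(j:ℕ)] := by simpa [List.get_eq_getElem] using heq
        rwa [← hij] at this
      have h3 := isPath_append h1 h2
      have hlen : (p.take ((i:ℕ)+1) ++ (p.drop (j:ℕ)).tail).length < p.length := by
        simp [List.length_take, List.length_tail, List.length_drop]
        omega
      exact ih _ hlen _ _ _ rfl h3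

theorem notMem_drop_succ_of_indexOf_le [DecidableEq V] {p : List V} (hnd : p.Nodup)
    {x : V} (hx : x ∈ p) {j : ℕ} (hle : p.idxOf x ≤ j) : x ∉ p.drop (j+1) := by
  intro hmem
  obtain ⟨k, hk, hkeq⟩ := List.mem_iff_getElem.mp hmem
  rw [List.getElem_drop] at hkeq
  have h1 : p.idxOf x < p.length := List.idxOf_lt_length_iff.mpr hx
  have h2 : p[p.idxOf x] = x := List.getElem_idxOf h1
  have h3 := hnd.getElem_inj_iff.mp (h2.trans hkeq.symm)
  omega

theorem nextVisible_union [DecidableEq V] (G : CFG V) (Q1 Q2 : Set V) {v v1 v2 : V}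
    (h1 : IsNextVisible G Q1 v v1) (h2 : IsNextVisible G Q2 v v2)
    {p0 : List V} (hp0 : IsPath G.succ p0 v G.End) (hnd : p0.Nodup)
    (hij : p0.idxOf v1 ≤ p0.idxOf v2) :
    IsNextVisible G (Q1 ∪ Q2) v v1 := by
  obtain ⟨hm1, hall1⟩ := h1
  obtain ⟨hm2, hall2⟩ := h2
  have hv1p : v1 ∈ p0 := hall1 G.End (Or.inr rfl) p0 hp0
  have hv2p : v2 ∈ p0 := hall2 G.End (Or.inr rfl) p0 hp0
  constructor
  · rcases hm1 with h | h
    · exact Or.inl (Or.inl h)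
    · exact Or.inr h
  · intro u hu q hq
    rcases hu with (hu | hu) | hu
    · exact hall1 u (Or.inl hu) q hq
    · -- u ∈ Q2
      have hv2q : v2 ∈ q := hall2 u (Or.inl hu) q hq
      have hj2 : q.idxOf v2 < q.length := List.idxOf_lt_length_iff.mpr hv2q
      have hq1 : IsPath G.succ (q.take (q.idxOf v2 + 1)) v v2 := by
        have := isPath_take hq hj2
        rwa [List.getElem_idxOf] at this
      have hj : p0.idxOf v2 < p0.length := List.idxOf_lt_length_iff.mpr hv2p
      have hs : IsPath G.succ (p0.drop (p0.idxOf v2)) v2 G.End := by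
        have := isPath_drop hp0 hj
        rwa [List.getElem_idxOf] at this
      have hwhole := isPath_append hq1 hs
      have hv1w : v1 ∈ _ := hall1 G.End (Or.inr rfl) _ hwhole
      rcases List.mem_append.mp hv1w with h | h
      · exact List.take_subset _ _ h
      · exfalso
        rw [List.tail_drop] at h
        exact notMem_drop_succ_of_indexOf_le hnd hv1p hij h
    · exact hall1 u (Or.inr hu) q hq

end Slicing

namespace Slicing

/-- The union of two weak slice sets is a weak slice set. -/
theorem weakSliceSet_union {V Var : Type} [Fintype V] (G : CFG V)
    (Def Use : V → Set Var) (Q1 Q2 : Set V)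
    (h1 : WeakSliceSet G Def Use Q1) (h2 : WeakSliceSet G Def Use Q2) :
    WeakSliceSet G Def Use (Q1 ∪ Q2) := by
  haveI := Classical.decEq V
  constructor
  · intro v
    obtain ⟨v1, hn1⟩ := h1.1 v
    obtain ⟨v2, hn2⟩ := h2.1 v
    obtain ⟨p, hp⟩ := G.reach_end v
    obtain ⟨p0, hp0, hnd⟩ := exists_nodup_isPath hp
    rcases le_total (p0.idxOf v1) (p0.idxOf v2) with hle | hle
    · exact ⟨v1, nextVisible_union G Q1 Q2 hn1 hn2 hp0 hnd hle⟩
    · refine ⟨v2, ?_⟩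
      have := nextVisible_union G Q2 Q1 hn2 hn1 hp0 hnd hle
      rwa [Set.union_comm] at this
  · intro a b hb hdd
    rcases hb with hb | hb
    · exact Or.inl (h1.2 a b hb hdd)
    · exact Or.inr (h2.2 a b hb hdd)

end Slicing
end

section
/- In a CFG, if nextq(Q,v) exists and v ∉ Q ∪ {End}, then v stays outside Q until fppd(v). -/
/-!
Let `u = nextq(Q,v)` and `v' = fppd(v)`. Every path from `v` to `End` meets `u`, and
`u ≠ v` because `v ∉ Q ∪ {End}`, so `u` is a proper postdominator of `v`; hence every path
from `v` to `u` meets `v'`. If a path from `v` to `v'` visited some `w ∈ Q` other than `v'`,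
its prefix up to `w` would pass through `u`, and the prefix up to `u` would then contain `v'`
strictly before the final position.
-/

namespace Slicing

variable {V : Type}

theorem IsPath.of_prefix {succ : V → V → Prop} {p q : List V} {v v' w : V}
    (hp : IsPath succ p v v') (hqp : q <+: p) (hq : q.getLast? = some w) :
    IsPath succ q v w := by
  refine ⟨hp.1.prefix hqp, ?_, hq⟩
  obtain ⟨t, rfl⟩ := hqp
  cases q with
  | nil => simp at hq
  | cons a q => simpa using hp.2.1

theorem IsPath.exists_prefix_of_mem {succ : V → V → Prop} {p l : List V} {v v' w : V}
    (hp : IsPath succ p v v') (hlp : l <+: p) (hw : w ∈ l) :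
    ∃ q, q <+: l ∧ IsPath succ q v w := by
  obtain ⟨s, t, rfl⟩ := List.append_of_mem hw
  have hprefix : s ++ [w] <+: s ++ w :: t := by simp
  exact ⟨s ++ [w], hprefix, hp.of_prefix (hprefix.trans hlp) (by simp)⟩

theorem IsFPPD.mem_of_isPath {G : CFG V} {v v' u : V} {p : List V} (hf : IsFPPD G v v')
    (hu : ProperPD G v u) (hp : IsPath G.succ p v u) : v' ∈ p := by
  by_cases huv : u = v'
  · exact huv ▸ List.mem_of_getLast? hp.2.2
  · exact hf.2 u hu huv p hp

theorem IsNextVisible.properPD {G : CFG V} {Q : Set V} {v u : V} (hu : IsNextVisible G Q v u)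
    (hvQ : v ∉ Q) (hvE : v ≠ G.End) : ProperPD G v u := by
  refine ⟨fun p hp => hu.2 G.End (Or.inr rfl) p hp, ?_⟩
  rintro rfl
  exact hu.1.elim hvQ hvE

theorem IsFPPD.mem_of_isPath_of_mem {G : CFG V} {Q : Set V} {v v' u w : V} {p : List V}
    (hf : IsFPPD G v v') (hu : IsNextVisible G Q v u) (hvQ : v ∉ Q) (hvE : v ≠ G.End)
    (hw : w ∈ Q) (hp : IsPath G.succ p v w) : v' ∈ p := by
  obtain ⟨r, hrp, hr⟩ := hp.exists_prefix_of_mem (List.prefix_refl p) (hu.2 w (Or.inl hw) p hp)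
  exact hrp.subset (hf.mem_of_isPath (hu.properPD hvQ hvE) hr)

theorem notQ_staysOutside_general {V : Type} (G : CFG V) (Q : Set V) (v : V)
    (hnv : ∃ u, IsNextVisible G Q v u) (hvQ : v ∉ Q) (hvE : v ≠ G.End)
    (v' : V) (hf : IsFPPD G v v') :
    StaysOutside G Q v v' := by
  intro p hp hv'p w hwp hwQ
  by_contra hwv'
  obtain ⟨u, hu⟩ := hnv
  have hw : w ∈ p.dropLast :=
    List.mem_dropLast_of_mem_of_ne_getLast? hwp (by rw [hp.2.2]; simpa using hwv')
  obtain ⟨q, hqp, hq⟩ := hp.exists_prefix_of_mem (List.dropLast_prefix p) hw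
  exact hv'p (hqp.subset (hf.mem_of_isPath_of_mem hu hvQ hvE hwQ hq))

/-- If `nextq(Q,v)` exists and `v ∉ Q ∪ {End}`, then `v` stays outside `Q`
until its first proper postdominator. -/
theorem notQ_staysOutside {V : Type} [Fintype V] (G : CFG V) (Q : Set V) (v : V)
    (hnv : ∃ u, IsNextVisible G Q v u) (hvQ : v ∉ Q) (hvE : v ≠ G.End)
    (v' : V) (hf : IsFPPD G v v') :
    StaysOutside G Q v v' :=
  notQ_staysOutside_general G Q v hnv hvQ hvE v' hf

end Slicing
end

section
/- Let f map distributions to distributions, and assume: (additivity) f(D1 + D2) = f(D1) + f(D2) for all distributions D1, D2 (sums taken pointwise); and (continuity) for every sequence of distributions (D_k) that is monotonically nondecreasing in the pointwise order, f(⨆_k D_k) = ⨆_k f(D_k), with suprema taken pointwise. If ∑f(D) = ∑D holds for every concentrated distribution D (one that vanishes outside a single store), then ∑f(D) = ∑D holds for every distribution D. -/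
open scoped ENNReal

namespace ProbSlicing

variable {U : Type}

/-- The marginal of a distribution `D` on a set `R` of variables, at a partial
store `s : R → ℤ`: the sum of `D s0` over all full stores `s0` agreeing with `s` on `R`. -/
noncomputable def marginal (D : (U → ℤ) → ℝ≥0∞) (R : Set U) (s : R → ℤ) : ℝ≥0∞ :=
  ∑' s0 : {s0 : U → ℤ // ∀ x : R, s0 x = s x}, D s0

/-- The total mass of a distribution. -/
noncomputable def mass (D : (U → ℤ) → ℝ≥0∞) : ℝ≥0∞ :=
  ∑' s0 : U → ℤ, D s0

open Classical in
/-- Combine partial stores on `R1` and on `R2` into a partial store on `R1 ∪ R2`. -/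
noncomputable def combine {R1 R2 : Set U} (s1 : R1 → ℤ) (s2 : R2 → ℤ) :
    ↥(R1 ∪ R2) → ℤ :=
  fun y => if h : (y : U) ∈ R1 then s1 ⟨y, h⟩ else s2 ⟨y, y.2.resolve_left h⟩

/-- `R1` and `R2` are (probabilistically) independent in `D`. -/
def Indep (D : (U → ℤ) → ℝ≥0∞) (R1 R2 : Set U) : Prop :=
  ∀ (s1 : R1 → ℤ) (s2 : R2 → ℤ),
    marginal D (R1 ∪ R2) (combine s1 s2) * mass D =
      marginal D R1 s1 * marginal D R2 s2

open Classical in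
/-- Extend a partial store on `R` to a full store (by `0` outside `R`). -/
noncomputable def extendStore (R : Set U) (s : R → ℤ) : U → ℤ :=
  fun y => if h : y ∈ R then s ⟨y, h⟩ else 0

end ProbSlicing

namespace ProbSlicing

theorem tsum_iSup_mono' {α : Type*} (g : ℕ → α → ℝ≥0∞)
    (hg : ∀ a, Monotone fun k => g k a) :
    ∑' a, ⨆ k, g k a = ⨆ k, ∑' a, g k a := by
  apply le_antisymm
  · rw [ENNReal.tsum_eq_iSup_sum]
    refine iSup_le fun s => ?_
    rw [ENNReal.finsetSum_iSup_of_monotone fun a => hg a]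
    exact iSup_mono fun k => ENNReal.sum_le_tsum s
  · exact iSup_le fun k => ENNReal.tsum_le_tsum fun a => le_iSup (fun k => g k a) k

/-- An additive and continuous function on distributions that is sum-preserving on
all concentrated distributions is sum-preserving. -/
theorem sum_preserving_of_concentrated {U : Type} [Fintype U]
    (f : ((U → ℤ) → ℝ≥0∞) → ((U → ℤ) → ℝ≥0∞))
    (hadd : ∀ D1 D2 : (U → ℤ) → ℝ≥0∞, f (D1 + D2) = f D1 + f D2)
    (hcont : ∀ Dk : ℕ → ((U → ℤ) → ℝ≥0∞), Monotone Dk →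
      f (⨆ k, Dk k) = ⨆ k, f (Dk k))
    (hconc : ∀ D : (U → ℤ) → ℝ≥0∞, (∃ s₀, ∀ s, s ≠ s₀ → D s = 0) →
      mass (f D) = mass D) :
    ∀ D : (U → ℤ) → ℝ≥0∞, mass (f D) = mass D := by
  intro D
  obtain ⟨enc, hinj⟩ := exists_injective_nat (U → ℤ)
  set Dk : ℕ → (U → ℤ) → ℝ≥0∞ := fun k s => if enc s < k then D s else 0 with hDkdef
  -- monotonicity of the truncations
  have hmono : Monotone Dk := by
    intro i j hij s
    dsimp only [Dk]
    by_cases h : enc s < i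
    · simp [h, lt_of_lt_of_le h hij]
    · simp [h]
  -- the truncations converge to D
  have hsup : (⨆ k, Dk k) = D := by
    funext s
    rw [iSup_apply]
    apply le_antisymm
    · refine iSup_le fun k => ?_
      dsimp only [Dk]; split_ifs <;> simp
    · have := le_iSup (fun k => Dk k s) (enc s + 1)
      simpa [Dk] using this
  -- decomposition of truncations into concentrated pieces
  have hDelta : ∀ k, Dk (k + 1) = Dk k + (fun s => if enc s = k then D s else 0) := by
    intro k
    funext s
    simp only [Pi.add_apply, Dk]
    by_cases h : enc s < k
    · simp [h, Nat.lt_succ_of_lt h, Nat.ne_of_lt h]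
    · by_cases h2 : enc s = k
      · have : enc s < k + 1 := by omega
        simp [h, h2, this]
      · have : ¬ enc s < k + 1 := by omega
        simp [h, h2, this]
  -- the pieces are concentrated
  have hconcpiece : ∀ k : ℕ,
      ∃ s₀, ∀ s, s ≠ s₀ → (fun s => if enc s = k then D s else 0) s = 0 := by
    intro k
    by_cases hex : ∃ s : U → ℤ, enc s = k
    · obtain ⟨s₀, hs₀⟩ := hex
      refine ⟨s₀, fun s hs => ?_⟩
      have : enc s ≠ k := fun he => hs (hinj (he.trans hs₀.symm))
      simp [this]
    · refine ⟨fun _ => 0, fun s _ => ?_⟩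
      have : enc s ≠ k := fun he => hex ⟨s, he⟩
      simp [this]
  -- mass is additive
  have massadd : ∀ A B : (U → ℤ) → ℝ≥0∞, mass (A + B) = mass A + mass B := by
    intro A B
    simp only [mass, Pi.add_apply]
    exact ENNReal.tsum_add
  -- f is monotone
  have hfmono : ∀ A B : (U → ℤ) → ℝ≥0∞, A ≤ B → f A ≤ f B := by
    intro A B h
    have hB : A + (B - A) = B := funext fun s => add_tsub_cancel_of_le (h s)
    rw [← hB, hadd]
    intro s
    exact le_self_add
  -- sum-preservation on each truncation, by induction
  have hk : ∀ k, mass (f (Dk k)) = mass (Dk k) := by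
    intro k
    induction k with
    | zero =>
        have h0 : Dk 0 = 0 := funext fun s => by simp [Dk]
        rw [h0]
        exact hconc 0 ⟨fun _ => 0, fun _ _ => rfl⟩
    | succ k ih =>
        rw [hDelta k, hadd, massadd, massadd, ih, hconc _ (hconcpiece k)]
  -- conclude
  calc mass (f D) = mass (f (⨆ k, Dk k)) := by rw [hsup]
    _ = mass (⨆ k, f (Dk k)) := by rw [hcont Dk hmono]
    _ = ⨆ k, mass (f (Dk k)) := by
        simp only [mass, iSup_apply]
        exact tsum_iSup_mono' _ (fun s i j hij => hfmono _ _ (hmono hij) s)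
    _ = ⨆ k, mass (Dk k) := by simp only [hk]
    _ = mass (⨆ k, Dk k) := by
        simp only [mass, iSup_apply]
        exact (tsum_iSup_mono' _ (fun s i j hij => hmono hij s)).symm
    _ = mass D := by rw [hsup]

end ProbSlicing
end

section
/- Fix x ∈ U and a function E : 𝓕 → ℤ, and let D' be the distribution defined by D'(s') = the sum, over all stores s ∈ 𝓕 with s' = s[x ↦ E(s)], of D(s), where s[x ↦ z] updates s at x to value z. If R ⊆ U and x ∉ R, then D and D' agree on R: D(s0) = D'(s0) for every partial store s0 : R → ℤ. In particular (taking R = ∅), ∑D' = ∑D. -/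
open scoped ENNReal

namespace ProbSlicing

/-- The transfer function of an assignment `x := E` does not change the marginal on
any set `R` of variables with `x ∉ R`; in particular it preserves total mass. -/
theorem assign_agrees {U : Type} [Fintype U] [DecidableEq U]
    (D D' : (U → ℤ) → ℝ≥0∞) (x : U) (E : (U → ℤ) → ℤ)
    (hD' : ∀ s', D' s' = ∑' s : {s : U → ℤ // s' = Function.update s x (E s)}, D s)
    (R : Set U) (hx : x ∉ R) :
    (∀ s0 : R → ℤ, marginal D R s0 = marginal D' R s0) ∧ mass D' = mass D := by
  constructor
  · intro s0
    let e : (Σ s' : {s' : U → ℤ // ∀ y : R, s' y = s0 y},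
        {s : U → ℤ // s'.1 = Function.update s x (E s)}) ≃
        {s : U → ℤ // ∀ y : R, s y = s0 y} :=
      { toFun := fun p => ⟨p.2.1, by
          intro y
          have h := p.1.2 y
          rw [p.2.2] at h
          rwa [Function.update_of_ne (by rintro rfl; exact hx y.2)] at h⟩
        invFun := fun s => ⟨⟨Function.update s.1 x (E s.1), by
          intro y
          rw [Function.update_of_ne (by rintro rfl; exact hx y.2)]
          exact s.2 y⟩, ⟨s.1, rfl⟩⟩
        left_inv := by
          rintro ⟨⟨s', hs'⟩, s, hs⟩
          have h2 : s' = Function.update s x (E s) := hs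
          subst h2; rfl
        right_inv := fun s => rfl }
    symm
    calc marginal D' R s0
        = ∑' s' : {s' : U → ℤ // ∀ y : R, s' y = s0 y},
            ∑' s : {s : U → ℤ // s'.1 = Function.update s x (E s)}, D s.1 :=
          tsum_congr fun s' => hD' s'.1
      _ = ∑' p : (Σ s' : {s' : U → ℤ // ∀ y : R, s' y = s0 y},
            {s : U → ℤ // s'.1 = Function.update s x (E s)}), D p.2.1 :=
          (ENNReal.tsum_sigma fun (s' : {s' : U → ℤ // ∀ y : R, s' y = s0 y}) (s : {s : U → ℤ // s'.1 = Function.update s x (E s)}) => D s.1).symm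
      _ = ∑' s : {s : U → ℤ // ∀ y : R, s y = s0 y}, D s.1 :=
          by exact e.tsum_eq fun s => D s.1
      _ = marginal D R s0 := rfl
  · let e : (Σ s' : U → ℤ, {s : U → ℤ // s' = Function.update s x (E s)}) ≃ (U → ℤ) :=
      { toFun := fun p => p.2.1
        invFun := fun s => ⟨Function.update s x (E s), ⟨s, rfl⟩⟩
        left_inv := by rintro ⟨s', s, rfl⟩; rfl
        right_inv := fun s => rfl }
    calc mass D'
        = ∑' s' : U → ℤ, ∑' s : {s : U → ℤ // s' = Function.update s x (E s)}, D s.1 :=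
          tsum_congr fun s' => hD' s'
      _ = ∑' p : (Σ s' : U → ℤ, {s : U → ℤ // s' = Function.update s x (E s)}), D p.2.1 :=
          (ENNReal.tsum_sigma fun s' (s : {s : U → ℤ // s' = Function.update s x (E s)}) => D s.1).symm
      _ = ∑' s : U → ℤ, D s := by exact e.tsum_eq D
      _ = mass D := rfl

end ProbSlicing
end

section
/- Fix x ∈ U, a function E : 𝓕 → ℤ, and a set F ⊆ U such that E(s) = E(s0) whenever stores s, s0 agree on F. Let D' be the distribution defined by D'(s') = the sum, over all stores s ∈ 𝓕 with s' = s[x ↦ E(s)], of D(s). Suppose R, R' ⊆ U with x ∈ R' and R'' ∪ F ⊆ R, where R'' = R' \ {x}. Then for every partial store s' : R' → ℤ, D'(s') = the sum, over all partial stores s : R → ℤ that agree with s' on R'' and satisfy s'(x) = E(s), of D(s); here E(s) denotes E applied to any full store extending s, which is well-defined since F ⊆ R. -/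
open scoped ENNReal

namespace ProbSlicing

/-- Marginal of the result of an assignment `x := E` (with free variables `F`) on a
set `R'` containing `x`: with `R'' = R' \ {x}` and `R'' ∪ F ⊆ R`, the marginal of
`D'` at `s' : R' → ℤ` is the sum of the marginals of `D` at those partial stores
`s : R → ℤ` that agree with `s'` on `R''` and satisfy `s'(x) = E(s)`. -/
theorem assign_marginal {U : Type} [Fintype U] [DecidableEq U]
    (D D' : (U → ℤ) → ℝ≥0∞) (x : U) (E : (U → ℤ) → ℤ) (F : Set U)
    (hE : ∀ s s0 : U → ℤ, (∀ y ∈ F, s y = s0 y) → E s = E s0)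
    (hD' : ∀ s', D' s' = ∑' s : {s : U → ℤ // s' = Function.update s x (E s)}, D s)
    (R R' : Set U) (hx : x ∈ R') (hsub : (R' \ {x}) ∪ F ⊆ R) :
    ∀ s' : R' → ℤ,
      marginal D' R' s' =
        ∑' s : {s : R → ℤ //
            (∀ y (hy : y ∈ R' \ {x}),
              s ⟨y, hsub (Set.mem_union_left F hy)⟩ = s' ⟨y, hy.1⟩) ∧
            s' ⟨x, hx⟩ = E (extendStore R s)},
          marginal D R s := by
  intro s'
  classical
  set P : (U → ℤ) → Prop := fun s =>
    (∀ y (hy : y ∈ R' \ {x}), s y = s' ⟨y, hy.1⟩) ∧ s' ⟨x, hx⟩ = E s with hP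
  have key : ∀ s : U → ℤ,
      (∀ y : R', Function.update s x (E s) y = s' y) ↔ P s := by
    intro s
    constructor
    · intro h
      refine ⟨fun y hy => ?_, ?_⟩
      · have h2 := h ⟨y, hy.1⟩
        rwa [Function.update_of_ne hy.2] at h2
      · have h2 := h ⟨x, hx⟩
        rw [Function.update_self] at h2
        exact h2.symm
    · rintro ⟨h1, h2⟩ ⟨y, hy⟩
      by_cases hyx : y = x
      · subst hyx
        rw [Function.update_self]
        exact h2.symm
      · rw [Function.update_of_ne hyx]
        exact h1 y ⟨hy, hyx⟩
  have hagree : ∀ (t : ↥R → ℤ) (s0 : U → ℤ), (∀ y : R, s0 y = t y) →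
      E (extendStore R t) = E s0 := by
    intro t s0 h
    refine hE _ _ fun y hyF => ?_
    have hyR : y ∈ R := hsub (Set.mem_union_right _ hyF)
    simp only [extendStore, dif_pos hyR]
    exact (h ⟨y, hyR⟩).symm
  have hEext : ∀ s : U → ℤ, E (extendStore R (fun y : ↥R => s y)) = E s :=
    fun s => hagree _ s fun y => rfl
  have hL : marginal D' R' s' = ∑' s : {s : U → ℤ // P s}, D s := by
    unfold marginal
    let e1 : {s : U → ℤ // P s} ≃
        Σ s0 : {s0 : U → ℤ // ∀ y : R', s0 y = s' y},
          {s : U → ℤ // (s0 : U → ℤ) = Function.update s x (E s)} :=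
      { toFun := fun s => ⟨⟨Function.update s.1 x (E s.1), (key s.1).2 s.2⟩, ⟨s.1, rfl⟩⟩
        invFun := fun p => ⟨p.2.1, (key p.2.1).1 (by
          intro y
          rw [← p.2.2]
          exact p.1.2 y)⟩
        left_inv := fun s => rfl
        right_inv := fun p => by
          obtain ⟨⟨s0, hs0⟩, s, hs⟩ := p
          have hs' : s0 = Function.update s x (E s) := hs
          subst hs'
          rfl }
    calc ∑' s0 : {s0 : U → ℤ // ∀ y : R', s0 y = s' y}, D' s0
        = ∑' s0 : {s0 : U → ℤ // ∀ y : R', s0 y = s' y},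
            ∑' s : {s : U → ℤ // (s0 : U → ℤ) = Function.update s x (E s)}, D s :=
          tsum_congr fun s0 => hD' s0
      _ = ∑' p : Σ s0 : {s0 : U → ℤ // ∀ y : R', s0 y = s' y},
            {s : U → ℤ // (s0 : U → ℤ) = Function.update s x (E s)}, D p.2 :=
          (ENNReal.tsum_sigma (β := fun s0 : {s0 : U → ℤ // ∀ y : R', s0 y = s' y} =>
            {s : U → ℤ // (s0 : U → ℤ) = Function.update s x (E s)}) fun _ s => D ↑s).symm
      _ = ∑' s : {s : U → ℤ // P s}, D ((e1 s).2 : U → ℤ) :=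
          (Equiv.tsum_eq e1 fun p => D p.2).symm
      _ = ∑' s : {s : U → ℤ // P s}, D s := tsum_congr fun s => rfl
  have hR : (∑' s : {s : ↥R → ℤ //
        (∀ y (hy : y ∈ R' \ {x}),
          s ⟨y, hsub (Set.mem_union_left F hy)⟩ = s' ⟨y, hy.1⟩) ∧
        s' ⟨x, hx⟩ = E (extendStore R s)}, marginal D R s)
      = ∑' s : {s : U → ℤ // P s}, D s := by
    unfold marginal
    let e2 : {s : U → ℤ // P s} ≃
        Σ t : {s : ↥R → ℤ //
            (∀ y (hy : y ∈ R' \ {x}),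
              s ⟨y, hsub (Set.mem_union_left F hy)⟩ = s' ⟨y, hy.1⟩) ∧
            s' ⟨x, hx⟩ = E (extendStore R s)},
          {s0 : U → ℤ // ∀ y : R, s0 y = (t : ↥R → ℤ) y} :=
      { toFun := fun s => ⟨⟨fun y => s.1 y,
          ⟨fun y hy => s.2.1 y hy, s.2.2.trans (hEext s.1).symm⟩⟩, ⟨s.1, fun y => rfl⟩⟩
        invFun := fun p => ⟨p.2.1,
          ⟨fun y hy => (p.2.2 ⟨y, hsub (Set.mem_union_left F hy)⟩).trans (p.1.2.1 y hy),
           p.1.2.2.trans (hagree p.1.1 p.2.1 p.2.2)⟩⟩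
        left_inv := fun s => rfl
        right_inv := fun p => by
          obtain ⟨⟨t, ht⟩, s0, hs0⟩ := p
          have h : t = fun y : ↥R => s0 y := funext fun y => (hs0 y).symm
          subst h
          rfl }
    calc ∑' t : {s : ↥R → ℤ //
            (∀ y (hy : y ∈ R' \ {x}),
              s ⟨y, hsub (Set.mem_union_left F hy)⟩ = s' ⟨y, hy.1⟩) ∧
            s' ⟨x, hx⟩ = E (extendStore R s)},
          ∑' s0 : {s0 : U → ℤ // ∀ y : R, s0 y = (t : ↥R → ℤ) y}, D s0
        = ∑' p : Σ t : {s : ↥R → ℤ //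
            (∀ y (hy : y ∈ R' \ {x}),
              s ⟨y, hsub (Set.mem_union_left F hy)⟩ = s' ⟨y, hy.1⟩) ∧
            s' ⟨x, hx⟩ = E (extendStore R s)},
            {s0 : U → ℤ // ∀ y : R, s0 y = (t : ↥R → ℤ) y}, D p.2 :=
          (ENNReal.tsum_sigma (β := fun t : {s : ↥R → ℤ //
            (∀ y (hy : y ∈ R' \ {x}),
              s ⟨y, hsub (Set.mem_union_left F hy)⟩ = s' ⟨y, hy.1⟩) ∧
            s' ⟨x, hx⟩ = E (extendStore R s)} =>
            {s0 : U → ℤ // ∀ y : R, s0 y = (t : ↥R → ℤ) y}) fun _ s0 => D ↑s0).symm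
      _ = ∑' s : {s : U → ℤ // P s}, D ((e2 s).2 : U → ℤ) :=
          (Equiv.tsum_eq e2 fun p => D p.2).symm
      _ = ∑' s : {s : U → ℤ // P s}, D s := tsum_congr fun s => rfl
  rw [hL, ← hR]


end ProbSlicing
end
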